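/- arXiv:1610.05186 — 4 statements merged into one kernel-verified Lean document; each statement's English description precedes it below -/
import Mathlib

section
/- Fix $z = x + i\eta$ with $x \ge 0$, $\eta > 0$, and let $g = -y + i\gamma$ with $y \in \mathbb{R}$, $\gamma > 0$ satisfy $g = -\mathbb{E}[\hat{D}/(z + g\hat{D})]$ for a nonnegative random variable $\hat{D}$ with $\mathbb{E}\hat{D} = 1$, where $\hat{W} := |z + g\hat{D}| > 0$ almost surely and $A := \mathbb{E}[\hat{D}\hat{W}^{-2}]$, $B := \mathbb{E}[\hat{D}^2\hat{W}^{-2}]$ are finite. Then $y = Ax/(1+B)$ and $\gamma = A\eta/(1-B)$; in particular $0 < B < 1$, $y \ge 0$, and $y > 0$ if and only if $x > 0$. -/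
/-!
Taking real and imaginary parts of the self-consistent equation gives, with the weights
`A = 𝔼[D̂ / Ŵ²]` and `B = 𝔼[D̂² / Ŵ²]`, the linear system `y = A x - B y`, `γ = A η + B γ`.
Both weights are positive because `D̂` is nonnegative with unit mean (so not a.s. zero) and
`Ŵ > 0` (the imaginary part of `z + g D̂` is `η + γ D̂ > 0`). Then the second equation reads
`γ (1 - B) = A η > 0`, which forces `B < 1`, and the system can be solved explicitly.
-/

open MeasureTheory

namespace Complex

theorem re_ofReal_div_add_mul (z g : ℂ) (d : ℝ) :
    ((d : ℂ) / (z + g * d)).re =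
      z.re * (d / ‖z + g * d‖ ^ 2) + g.re * (d ^ 2 / ‖z + g * d‖ ^ 2) := by
  rw [div_re, ← normSq_eq_norm_sq]
  simp only [ofReal_re, ofReal_im, add_re, add_im, mul_re, mul_im]
  ring

theorem im_ofReal_div_add_mul (z g : ℂ) (d : ℝ) :
    ((d : ℂ) / (z + g * d)).im =
      -(z.im * (d / ‖z + g * d‖ ^ 2) + g.im * (d ^ 2 / ‖z + g * d‖ ^ 2)) := by
  rw [div_im, ← normSq_eq_norm_sq]
  simp only [ofReal_re, ofReal_im, add_re, add_im, mul_re, mul_im]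
  ring

theorem add_mul_ofReal_ne_zero {z g : ℂ} {d : ℝ} (hz : 0 < z.im) (hg : 0 ≤ g.im) (hd : 0 ≤ d) :
    z + g * d ≠ 0 := by
  intro h
  have him := congrArg im h
  simp only [add_im, mul_im, ofReal_re, ofReal_im, mul_zero, zero_im] at him
  nlinarith [mul_nonneg hg hd]

end Complex

section SelfConsistentEquation

variable {Ω : Type*} [MeasurableSpace Ω] {μ : Measure Ω} {D : Ω → ℝ} (z g : ℂ)

theorem re_integral_ofReal_div_add_mul
    (hf : Integrable (fun ω => (D ω : ℂ) / (z + g * D ω)) μ)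
    (hA : Integrable (fun ω => D ω / ‖z + g * D ω‖ ^ 2) μ)
    (hB : Integrable (fun ω => D ω ^ 2 / ‖z + g * D ω‖ ^ 2) μ) :
    (∫ ω, (D ω : ℂ) / (z + g * D ω) ∂μ).re =
      z.re * ∫ ω, D ω / ‖z + g * D ω‖ ^ 2 ∂μ + g.re * ∫ ω, D ω ^ 2 / ‖z + g * D ω‖ ^ 2 ∂μ := by
  rw [← RCLike.re_to_complex, ← integral_re hf]
  simp only [RCLike.re_to_complex, Complex.re_ofReal_div_add_mul]
  rw [integral_add (hA.const_mul _) (hB.const_mul _), integral_const_mul, integral_const_mul]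

theorem im_integral_ofReal_div_add_mul
    (hf : Integrable (fun ω => (D ω : ℂ) / (z + g * D ω)) μ)
    (hA : Integrable (fun ω => D ω / ‖z + g * D ω‖ ^ 2) μ)
    (hB : Integrable (fun ω => D ω ^ 2 / ‖z + g * D ω‖ ^ 2) μ) :
    (∫ ω, (D ω : ℂ) / (z + g * D ω) ∂μ).im =
      -(z.im * ∫ ω, D ω / ‖z + g * D ω‖ ^ 2 ∂μ + g.im * ∫ ω, D ω ^ 2 / ‖z + g * D ω‖ ^ 2 ∂μ) := by
  rw [← RCLike.im_to_complex, ← integral_im hf]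
  simp only [RCLike.im_to_complex, Complex.im_ofReal_div_add_mul]
  rw [integral_neg, integral_add (hA.const_mul _) (hB.const_mul _), integral_const_mul,
    integral_const_mul]

end SelfConsistentEquation

theorem integral_pos_of_ae_ne_zero_imp {Ω : Type*} [MeasurableSpace Ω] {μ : Measure Ω}
    {f h : Ω → ℝ} (hf : 0 ≤ᵐ[μ] f) (hfi : Integrable f μ) (hsupp : ∀ᵐ ω ∂μ, h ω ≠ 0 → f ω ≠ 0)
    (hh : ∫ ω, h ω ∂μ ≠ 0) : 0 < ∫ ω, f ω ∂μ := by
  refine (integral_nonneg_of_ae hf).lt_of_ne fun hf0 => hh ?_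
  have hf_ae : f =ᵐ[μ] 0 := (integral_eq_zero_iff_of_nonneg_ae hf hfi).mp hf0.symm
  have hh_ae : h =ᵐ[μ] 0 := by
    filter_upwards [hf_ae, hsupp] with ω hfω hω
    by_contra hne
    exact hω hne hfω
  simp [integral_congr_ae hh_ae]

theorem solve_self_consistent_system {x η y γ A B : ℝ} (hx : 0 ≤ x) (hη : 0 < η) (hγ : 0 < γ)
    (hA : 0 < A) (hB : 0 < B) (hy_eq : y = A * x - B * y) (hγ_eq : γ = A * η + B * γ) :
    y = A * x / (1 + B) ∧ γ = A * η / (1 - B) ∧ B < 1 ∧ 0 ≤ y ∧ (0 < y ↔ 0 < x) := by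
  have hB1 : B < 1 := by nlinarith [mul_pos hA hη]
  have hy : y = A * x / (1 + B) := by
    rw [eq_div_iff (by positivity)]
    linarith
  refine ⟨hy, ?_, hB1, by rw [hy]; positivity, ?_⟩
  · rw [eq_div_iff (by linarith)]
    linarith
  · rw [hy, div_pos_iff_of_pos_right (by positivity), mul_pos_iff_of_pos_left hA]

theorem stmt5_general {Ω : Type} [MeasurableSpace Ω] (μ : Measure Ω)
    (D : Ω → ℝ) (hD0 : ∀ᵐ ω ∂μ, 0 ≤ D ω)
    (hmean : ∫ ω, D ω ∂μ = 1)
    (x η y γ : ℝ) (hx : 0 ≤ x) (hη : 0 < η) (hγ : 0 < γ)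
    (z g : ℂ) (hz : z = x + η * Complex.I) (hg : g = -y + γ * Complex.I)
    (hIntEq : Integrable (fun ω => (D ω : ℂ) / (z + g * D ω)) μ)
    (heq : g = -∫ ω, (D ω : ℂ) / (z + g * D ω) ∂μ)
    (A B : ℝ)
    (hIntA : Integrable (fun ω => D ω / ‖z + g * D ω‖ ^ 2) μ)
    (hA : A = ∫ ω, D ω / ‖z + g * D ω‖ ^ 2 ∂μ)
    (hIntB : Integrable (fun ω => D ω ^ 2 / ‖z + g * D ω‖ ^ 2) μ)
    (hB : B = ∫ ω, D ω ^ 2 / ‖z + g * D ω‖ ^ 2 ∂μ) :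
    y = A * x / (1 + B) ∧ γ = A * η / (1 - B) ∧ 0 < B ∧ B < 1 ∧ 0 ≤ y ∧
      (0 < y ↔ 0 < x) := by
  have hzre : z.re = x := by simp [hz]
  have hzim : z.im = η := by simp [hz]
  have hgre : g.re = -y := by simp [hg]
  have hgim : g.im = γ := by simp [hg]
  have hre := congrArg Complex.re heq
  have him := congrArg Complex.im heq
  rw [Complex.neg_re, re_integral_ofReal_div_add_mul z g hIntEq hIntA hIntB, ← hA, ← hB,
    hzre, hgre] at hre
  rw [Complex.neg_im, im_integral_ofReal_div_add_mul z g hIntEq hIntA hIntB, ← hA, ← hB,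
    hzim, hgim] at him
  have hy_eq : y = A * x - B * y := by linarith
  have hγ_eq : γ = A * η + B * γ := by linarith
  have hW : ∀ᵐ ω ∂μ, ‖z + g * D ω‖ ^ 2 ≠ 0 := by
    filter_upwards [hD0] with ω hω
    exact pow_ne_zero 2 (norm_ne_zero_iff.mpr
      (Complex.add_mul_ofReal_ne_zero (hzim ▸ hη) (hgim ▸ hγ.le) hω))
  have hD : ∫ ω, D ω ∂μ ≠ 0 := hmean ▸ one_ne_zero
  have hApos : 0 < A := hA ▸ integral_pos_of_ae_ne_zero_imp
    (by filter_upwards [hD0] with ω hω using by positivity) hIntA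
    (by filter_upwards [hW] with ω hω hd using div_ne_zero hd hω) hD
  have hBpos : 0 < B := hB ▸ integral_pos_of_ae_ne_zero_imp
    (Filter.Eventually.of_forall fun ω => by positivity) hIntB
    (by filter_upwards [hW] with ω hω hd using div_ne_zero (pow_ne_zero 2 hd) hω) hD
  obtain ⟨hy, hγ', hB1, hy0, hypos⟩ :=
    solve_self_consistent_system hx hη hγ hApos hBpos hy_eq hγ_eq
  exact ⟨hy, hγ', hBpos, hB1, hy0, hypos⟩

theorem stmt5 {Ω : Type} [MeasurableSpace Ω] (μ : Measure Ω) [IsProbabilityMeasure μ]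
    (D : Ω → ℝ) (hmeas : Measurable D) (hD0 : ∀ᵐ ω ∂μ, 0 ≤ D ω)
    (hInt : Integrable D μ) (hmean : ∫ ω, D ω ∂μ = 1)
    (x η y γ : ℝ) (hx : 0 ≤ x) (hη : 0 < η) (hγ : 0 < γ)
    (z g : ℂ) (hz : z = x + η * Complex.I) (hg : g = -y + γ * Complex.I)
    (hW : ∀ᵐ ω ∂μ, 0 < ‖z + g * D ω‖)
    (hIntEq : Integrable (fun ω => (D ω : ℂ) / (z + g * D ω)) μ)
    (heq : g = -∫ ω, (D ω : ℂ) / (z + g * D ω) ∂μ)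
    (A B : ℝ)
    (hIntA : Integrable (fun ω => D ω / ‖z + g * D ω‖ ^ 2) μ)
    (hA : A = ∫ ω, D ω / ‖z + g * D ω‖ ^ 2 ∂μ)
    (hIntB : Integrable (fun ω => D ω ^ 2 / ‖z + g * D ω‖ ^ 2) μ)
    (hB : B = ∫ ω, D ω ^ 2 / ‖z + g * D ω‖ ^ 2 ∂μ) :
    y = A * x / (1 + B) ∧ γ = A * η / (1 - B) ∧ 0 < B ∧ B < 1 ∧ 0 ≤ y ∧
      (0 < y ↔ 0 < x) :=
  stmt5_general μ D hD0 hmean x η y γ hx hη hγ z g hz hg hIntEq heq A B hIntA hA hIntB hB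
end

section
/- Let $\hat{D}$ be a nonnegative random variable with $\mathbb{E}\hat{D} = 1$, and suppose $z \in \mathbb{C}$ with $\Im(z) > 0$ and $g \in \mathbb{C}$ with $\Im(g) > 0$ satisfy $g = -\mathbb{E}[\hat{D}/(z + g\hat{D})]$, with $|z+g\hat D|>0$ a.s. and $B := \mathbb{E}[\hat{D}^2 |z+g\hat{D}|^{-2}] < 1$. Then $|g| \le \min(1, 2/|\Re(z)|)$. -/
open MeasureTheory

/-!
Write `W = z + g D`. The fixed-point equation gives `‖g‖ ≤ 𝔼[D / ‖W‖]`, and Cauchy–Schwarz bounds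
the square of the right side both by `B = 𝔼[D² / ‖W‖²] < 1` and, with weight `D` (the size-biased
law, `𝔼 D = 1`), by `A = 𝔼[D / ‖W‖²]`. Taking real parts of the fixed-point equation gives
`Re g · (1 + B) = -Re z · A`, hence `|Re z| A ≤ 2 ‖g‖`; together with `‖g‖² ≤ A` this is
`‖g‖ ≤ 2 / |Re z|`. All integrability comes from `𝔼 D`, `B`, and `‖W‖ ≥ Im W ≥ Im z > 0`.
-/

section CauchySchwarz

variable {Ω : Type*} [MeasurableSpace Ω] {μ : Measure Ω}

theorem sq_integral_mul_le_of_nonneg {f h : Ω → ℝ} (hf0 : 0 ≤ᵐ[μ] f) (hh0 : 0 ≤ᵐ[μ] h)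
    (hf : MemLp f 2 μ) (hh : MemLp h 2 μ) :
    (∫ ω, f ω * h ω ∂μ) ^ 2 ≤ (∫ ω, f ω ^ 2 ∂μ) * ∫ ω, h ω ^ 2 ∂μ := by
  have holder := integral_mul_le_Lp_mul_Lq_of_nonneg Real.HolderConjugate.two_two hf0 hh0
    (by simpa using hf) (by simpa using hh)
  simp only [Real.rpow_two, ← Real.sqrt_eq_rpow] at holder
  have hfh0 : 0 ≤ ∫ ω, f ω * h ω ∂μ :=
    integral_nonneg_of_ae (by filter_upwards [hf0, hh0] with ω using mul_nonneg)
  calc (∫ ω, f ω * h ω ∂μ) ^ 2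
      ≤ (√(∫ ω, f ω ^ 2 ∂μ) * √(∫ ω, h ω ^ 2 ∂μ)) ^ 2 := pow_le_pow_left₀ hfh0 holder 2
    _ = (∫ ω, f ω ^ 2 ∂μ) * ∫ ω, h ω ^ 2 ∂μ := by
      rw [mul_pow, Real.sq_sqrt (integral_nonneg fun _ => sq_nonneg _),
        Real.sq_sqrt (integral_nonneg fun _ => sq_nonneg _)]

theorem sq_integral_mul_le_integral_mul_integral_mul_sq {w f : Ω → ℝ} (hw0 : 0 ≤ᵐ[μ] w)
    (hf0 : 0 ≤ᵐ[μ] f) (hw : Integrable w μ) (hf : AEStronglyMeasurable f μ)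
    (hwf : Integrable (fun ω => w ω * f ω ^ 2) μ) :
    (∫ ω, w ω * f ω ∂μ) ^ 2 ≤ (∫ ω, w ω ∂μ) * ∫ ω, w ω * f ω ^ 2 ∂μ := by
  have hsqrt : AEStronglyMeasurable (fun ω => √(w ω)) μ :=
    Real.continuous_sqrt.comp_aestronglyMeasurable hw.aestronglyMeasurable
  have cs := sq_integral_mul_le_of_nonneg (f := fun ω => √(w ω)) (h := fun ω => √(w ω) * f ω)
    (ae_of_all _ fun _ => Real.sqrt_nonneg _)
    (by filter_upwards [hf0] with ω hω using mul_nonneg (Real.sqrt_nonneg _) hω)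
    ((memLp_two_iff_integrable_sq hsqrt).2 (hw.congr (by
      filter_upwards [hw0] with ω hω using (Real.sq_sqrt hω).symm)))
    ((memLp_two_iff_integrable_sq (hsqrt.mul hf)).2 (hwf.congr (by
      filter_upwards [hw0] with ω hω using by simp only [Pi.mul_apply, mul_pow, Real.sq_sqrt hω])))
  have h1 : ∫ ω, √(w ω) * (√(w ω) * f ω) ∂μ = ∫ ω, w ω * f ω ∂μ := integral_congr_ae (by
    filter_upwards [hw0] with ω hω using by rw [← mul_assoc, Real.mul_self_sqrt hω])
  have h2 : ∫ ω, √(w ω) ^ 2 ∂μ = ∫ ω, w ω ∂μ := integral_congr_ae (by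
    filter_upwards [hw0] with ω hω using Real.sq_sqrt hω)
  have h3 : ∫ ω, (√(w ω) * f ω) ^ 2 ∂μ = ∫ ω, w ω * f ω ^ 2 ∂μ := integral_congr_ae (by
    filter_upwards [hw0] with ω hω using by rw [mul_pow, Real.sq_sqrt hω])
  rwa [h1, h2, h3] at cs

end CauchySchwarz

namespace Complex

theorem im_le_norm_add_mul_ofReal {z g : ℂ} {x : ℝ} (hg : 0 ≤ g.im) (hx : 0 ≤ x) :
    z.im ≤ ‖z + g * x‖ :=
  calc z.im ≤ (z + g * x).im := by simpa using mul_nonneg hg hx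
    _ ≤ ‖z + g * x‖ := im_le_norm _

theorem re_ofReal_div_add_mul_ofReal (z g : ℂ) (x : ℝ) :
    ((x : ℂ) / (z + g * x)).re
      = z.re * (x / ‖z + g * x‖ ^ 2) + g.re * (x ^ 2 / ‖z + g * x‖ ^ 2) := by
  rw [div_re, normSq_eq_norm_sq]
  simp only [ofReal_re, ofReal_im, add_re, mul_re]
  ring

end Complex

section FixedPoint

variable {Ω : Type*} [MeasurableSpace Ω] {μ : Measure Ω} {D : Ω → ℝ} {z g : ℂ}

theorem memLp_div_norm (hD : AEMeasurable D μ)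
    (hB : Integrable (fun ω => D ω ^ 2 / ‖z + g * D ω‖ ^ 2) μ) :
    MemLp (fun ω => D ω / ‖z + g * D ω‖) 2 μ :=
  (memLp_two_iff_integrable_sq (hD.div (by fun_prop)).aestronglyMeasurable).2
    (by simpa only [Pi.div_apply, div_pow] using hB)

theorem integrable_div_norm_sq (hz : 0 < z.im) (hg : 0 ≤ g.im) (hD0 : ∀ᵐ ω ∂μ, 0 ≤ D ω)
    (hD : AEMeasurable D μ) (hu : Integrable (fun ω => D ω / ‖z + g * D ω‖) μ) :
    Integrable (fun ω => D ω / ‖z + g * D ω‖ ^ 2) μ := by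
  refine (hu.div_const z.im).mono' (hD.div (by fun_prop)).aestronglyMeasurable ?_
  filter_upwards [hD0] with ω hω
  have hW := Complex.im_le_norm_add_mul_ofReal (z := z) hg hω
  rw [Real.norm_of_nonneg (by positivity), sq, ← div_div]
  exact div_le_div_of_nonneg_left (by positivity) hz hW

theorem norm_le_integral_div_norm (hD0 : ∀ᵐ ω ∂μ, 0 ≤ D ω)
    (heq : g = -∫ ω, (D ω : ℂ) / (z + g * D ω) ∂μ) :
    ‖g‖ ≤ ∫ ω, D ω / ‖z + g * D ω‖ ∂μ := by
  conv_lhs => rw [heq, norm_neg]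
  refine (norm_integral_le_integral_norm _).trans_eq (integral_congr_ae ?_)
  filter_upwards [hD0] with ω hω
  simp [abs_of_nonneg hω]

theorem re_mul_one_add_integral (hD : Integrable (fun ω => (D ω : ℂ) / (z + g * D ω)) μ)
    (hA : Integrable (fun ω => D ω / ‖z + g * D ω‖ ^ 2) μ)
    (hB : Integrable (fun ω => D ω ^ 2 / ‖z + g * D ω‖ ^ 2) μ)
    (heq : g = -∫ ω, (D ω : ℂ) / (z + g * D ω) ∂μ) :
    g.re * (1 + ∫ ω, D ω ^ 2 / ‖z + g * D ω‖ ^ 2 ∂μ)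
      = -(z.re * ∫ ω, D ω / ‖z + g * D ω‖ ^ 2 ∂μ) := by
  have hre : g.re = -∫ ω, ((D ω : ℂ) / (z + g * D ω)).re ∂μ := by
    conv_lhs => rw [heq]
    rw [Complex.neg_re, ← RCLike.re_to_complex, ← integral_re hD]
    rfl
  simp only [Complex.re_ofReal_div_add_mul_ofReal] at hre
  rw [integral_add (hA.const_mul _) (hB.const_mul _), integral_const_mul,
    integral_const_mul] at hre
  linear_combination hre

end FixedPoint

theorem Complex.norm_le_two_div_abs_re {z g : ℂ} {A B : ℝ} (hgA : ‖g‖ ^ 2 ≤ A) (hB0 : 0 ≤ B)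
    (hB1 : B ≤ 1) (hre : g.re * (1 + B) = -(z.re * A)) (hz : z.re ≠ 0) :
    ‖g‖ ≤ 2 / |z.re| := by
  have hA0 : 0 ≤ A := (sq_nonneg _).trans hgA
  have hA : |z.re| * A ≤ 2 * ‖g‖ :=
    calc |z.re| * A = |g.re * (1 + B)| := by rw [hre, abs_neg, abs_mul, abs_of_nonneg hA0]
      _ = |g.re| * (1 + B) := by rw [abs_mul, abs_of_nonneg (show 0 ≤ 1 + B by linarith)]
      _ ≤ ‖g‖ * 2 := by gcongr; exacts [Complex.abs_re_le_norm g, by linarith]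
      _ = 2 * ‖g‖ := mul_comm _ _
  rw [le_div_iff₀ (abs_pos.2 hz)]
  rcases (norm_nonneg g).eq_or_lt with hg | hg
  · rw [← hg, zero_mul]; norm_num
  · nlinarith [mul_le_mul_of_nonneg_left hgA (abs_nonneg z.re)]

theorem stmt6_general {Ω : Type} [MeasurableSpace Ω] (μ : Measure Ω) [IsProbabilityMeasure μ]
    (D : Ω → ℝ) (hD0 : ∀ᵐ ω ∂μ, 0 ≤ D ω)
    (hInt : Integrable D μ) (hmean : ∫ ω, D ω ∂μ = 1)
    (z g : ℂ) (hz : 0 < z.im) (hg : 0 < g.im)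
    (hIntEq : Integrable (fun ω => (D ω : ℂ) / (z + g * D ω)) μ)
    (heq : g = -∫ ω, (D ω : ℂ) / (z + g * D ω) ∂μ)
    (hIntB : Integrable (fun ω => D ω ^ 2 / ‖z + g * D ω‖ ^ 2) μ)
    (hB : ∫ ω, D ω ^ 2 / ‖z + g * D ω‖ ^ 2 ∂μ < 1) :
    ‖g‖ ≤ 1 ∧ (z.re ≠ 0 → ‖g‖ ≤ 2 / |z.re|) := by
  have hu := memLp_div_norm hInt.aemeasurable hIntB
  have hA := integrable_div_norm_sq hz hg.le hD0 hInt.aemeasurable (hu.integrable one_le_two)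
  have hgu := pow_le_pow_left₀ (norm_nonneg g) (norm_le_integral_div_norm hD0 heq) 2
  have hgB : ‖g‖ ^ 2 ≤ ∫ ω, D ω ^ 2 / ‖z + g * D ω‖ ^ 2 ∂μ := by
    have cs := sq_integral_mul_le_of_nonneg (h := fun _ => 1)
      (by filter_upwards [hD0] with ω hω using div_nonneg hω (norm_nonneg _))
      (ae_of_all _ fun _ => zero_le_one) hu (memLp_const 1)
    exact hgu.trans (by simpa [div_pow] using cs)
  have hgA : ‖g‖ ^ 2 ≤ ∫ ω, D ω / ‖z + g * D ω‖ ^ 2 ∂μ := by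
    have cs := sq_integral_mul_le_integral_mul_integral_mul_sq
      (f := fun ω => ‖z + g * D ω‖⁻¹) hD0 (ae_of_all _ fun _ => inv_nonneg.2 (norm_nonneg _))
      hInt (by fun_prop) (by simpa [inv_pow, ← div_eq_mul_inv] using hA)
    exact hgu.trans (by simpa [inv_pow, ← div_eq_mul_inv, hmean] using cs)
  have hB0 : 0 ≤ ∫ ω, D ω ^ 2 / ‖z + g * D ω‖ ^ 2 ∂μ := integral_nonneg fun _ => by positivity
  exact ⟨(sq_le_one_iff₀ (norm_nonneg g)).1 (hgB.trans hB.le),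
    Complex.norm_le_two_div_abs_re hgA hB0 hB.le (re_mul_one_add_integral hIntEq hA hIntB heq)⟩

theorem stmt6 {Ω : Type} [MeasurableSpace Ω] (μ : Measure Ω) [IsProbabilityMeasure μ]
    (D : Ω → ℝ) (hmeas : Measurable D) (hD0 : ∀ᵐ ω ∂μ, 0 ≤ D ω)
    (hInt : Integrable D μ) (hmean : ∫ ω, D ω ∂μ = 1)
    (z g : ℂ) (hz : 0 < z.im) (hg : 0 < g.im)
    (hW : ∀ᵐ ω ∂μ, 0 < ‖z + g * D ω‖)
    (hIntEq : Integrable (fun ω => (D ω : ℂ) / (z + g * D ω)) μ)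
    (heq : g = -∫ ω, (D ω : ℂ) / (z + g * D ω) ∂μ)
    (hIntB : Integrable (fun ω => D ω ^ 2 / ‖z + g * D ω‖ ^ 2) μ)
    (hB : ∫ ω, D ω ^ 2 / ‖z + g * D ω‖ ^ 2 ∂μ < 1) :
    ‖g‖ ≤ 1 ∧ (z.re ≠ 0 → ‖g‖ ≤ 2 / |z.re|) :=
  stmt6_general μ D hD0 hInt hmean z g hz hg hIntEq heq hIntB hB
end

section
/- Let $\alpha > 1 > \beta > 0$ and $q_o \in (0,1)$ with $\alpha q_o + \beta(1-q_o) = 1$, and set $q = \alpha q_o$. Define the cubic polynomial $P(v) = -2\alpha\beta(q\beta + (1-q)\alpha)v^3 + (q\beta^2 + 4\alpha\beta + (1-q)\alpha^2)v^2 - 2(\alpha+\beta)v + 1$. Then the discriminant of $P$ equals $4q(1-q)(\alpha-\beta)^2\big(\alpha(\alpha-2\beta)^3 - q(\alpha-\beta)(\alpha+\beta)^3\big)$. -/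
theorem discr_cubic_eq_factorization {R : Type*} [CommRing R] (α β q : R) :
    (Cubic.mk (-2 * α * β * (q * β + (1 - q) * α)) (q * β ^ 2 + 4 * α * β + (1 - q) * α ^ 2)
        (-2 * (α + β)) 1).discr =
      4 * q * (1 - q) * (α - β) ^ 2 * (α * (α - 2 * β) ^ 3 - q * (α - β) * (α + β) ^ 3) := by
  rw [Cubic.discr]
  ring

theorem stmt9_general (α β qo : ℝ) :
    let q := α * qo
    let a := -2 * α * β * (q * β + (1 - q) * α)
    let b := q * β ^ 2 + 4 * α * β + (1 - q) * α ^ 2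
    let c := -2 * (α + β)
    let d := (1 : ℝ)
    b ^ 2 * c ^ 2 - 4 * a * c ^ 3 - 4 * b ^ 3 * d + 18 * a * b * c * d -
        27 * a ^ 2 * d ^ 2 =
      4 * q * (1 - q) * (α - β) ^ 2 *
        (α * (α - 2 * β) ^ 3 - q * (α - β) * (α + β) ^ 3) := by
  intro q a b c d
  have h := discr_cubic_eq_factorization α β q
  rw [Cubic.discr] at h
  linear_combination h

theorem stmt9 (α β qo : ℝ) (hα : 1 < α) (hβ0 : 0 < β) (hβ1 : β < 1)
    (hqo0 : 0 < qo) (hqo1 : qo < 1) (hmean : α * qo + β * (1 - qo) = 1) :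
    let q := α * qo
    let a := -2 * α * β * (q * β + (1 - q) * α)
    let b := q * β ^ 2 + 4 * α * β + (1 - q) * α ^ 2
    let c := -2 * (α + β)
    let d := (1 : ℝ)
    b ^ 2 * c ^ 2 - 4 * a * c ^ 3 - 4 * b ^ 3 * d + 18 * a * b * c * d -
        27 * a ^ 2 * d ^ 2 =
      4 * q * (1 - q) * (α - β) ^ 2 *
        (α * (α - 2 * β) ^ 3 - q * (α - β) * (α + β) ^ 3) :=
  stmt9_general α β qo
end

section
/- Let $\hat{D}$ be a nonnegative random variable with $\mathbb{E}\hat{D}=1$, and for $\eta > 0$ suppose $\gamma(\eta) > 0$ satisfies $\gamma(\eta) = \mathbb{E}[\hat{D}/(\eta + \gamma(\eta)\hat{D})]$ and $\gamma(\eta) \le 1$. If $\mathbb{P}(\hat{D} = 0) = 0$, then $\gamma(\eta) \to 1$ as $\eta \downarrow 0$. -/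
/-!
Markov's inequality applied to `D / (η + γ D)` gives, for every `δ > 0`,
`γ(η) ≥ δ / (η + δ) · P(D ≥ δ)`, because `x ↦ x / (η + γ x)` dominates `x / (η + x)`, which is
increasing. Letting `η ↓ 0` bounds `liminf γ` below by `P(D ≥ δ)`, which tends to `P(D > 0) = 1`
as `δ ↓ 0`; together with `γ ≤ 1` this forces `γ(η) → 1`.
-/

open MeasureTheory Filter Topology

lemma div_add_le_div_add_mul {δ x η g : ℝ} (hδ : 0 < δ) (hδx : δ ≤ x) (hη : 0 < η)
    (hg0 : 0 ≤ g) (hg1 : g ≤ 1) : δ / (η + δ) ≤ x / (η + g * x) := by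
  have hx : 0 < x := hδ.trans_le hδx
  rw [div_le_div_iff₀ (by positivity) (by positivity)]
  nlinarith [mul_le_mul_of_nonneg_left hg1 (mul_nonneg hδ.le hx.le)]

lemma mul_measureReal_le_integral_div_add_mul {Ω : Type*} [MeasurableSpace Ω] {μ : Measure Ω}
    [IsFiniteMeasure μ] {D : Ω → ℝ} (hD0 : ∀ᵐ ω ∂μ, 0 ≤ D ω) {η g δ : ℝ} (hη : 0 < η)
    (hg0 : 0 ≤ g) (hg1 : g ≤ 1) (hδ : 0 < δ) (hint : Integrable (fun ω => D ω / (η + g * D ω)) μ) :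
    δ / (η + δ) * μ.real {ω | δ ≤ D ω} ≤ ∫ ω, D ω / (η + g * D ω) ∂μ := by
  have hnonneg : 0 ≤ᵐ[μ] fun ω => D ω / (η + g * D ω) := by
    filter_upwards [hD0] with ω hω
    positivity
  calc δ / (η + δ) * μ.real {ω | δ ≤ D ω}
      ≤ δ / (η + δ) * μ.real {ω | δ / (η + δ) ≤ D ω / (η + g * D ω)} := by
        gcongr ?_ * ?_
        exact measureReal_mono fun ω hω => div_add_le_div_add_mul hδ hω hη hg0 hg1
    _ ≤ ∫ ω, D ω / (η + g * D ω) ∂μ := mul_meas_ge_le_integral_of_nonneg hnonneg hint _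

lemma tendsto_measureReal_le_nhdsGT_zero {Ω : Type*} [MeasurableSpace Ω] {μ : Measure Ω}
    [IsProbabilityMeasure μ] {D : Ω → ℝ} (hmeas : Measurable D) (hnull : μ {ω | D ω ≤ 0} = 0) :
    Tendsto (fun δ => μ.real {ω | δ ≤ D ω}) (𝓝[>] 0) (𝓝 1) := by
  have hbelow : Tendsto (fun δ : ℝ => μ {ω | D ω < δ}) (𝓝[>] 0) (𝓝 0) := by
    have hinter : (⋂ δ > (0 : ℝ), {ω | D ω < δ}) = {ω | D ω ≤ 0} := by
      ext ω
      simp only [Set.mem_iInter, Set.mem_ofPred_eq]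
      exact ⟨fun h => le_of_forall_pos_lt_add fun ε hε => by simpa using h ε hε,
        fun h δ hδ => h.trans_lt hδ⟩
    have := tendsto_measure_biInter_gt (μ := μ) (s := fun δ : ℝ => {ω | D ω < δ}) (a := 0)
      (fun δ _ => (measurableSet_lt hmeas measurable_const).nullMeasurableSet)
      (fun _ _ _ hij _ hω => lt_of_lt_of_le hω hij) ⟨1, one_pos, measure_ne_top _ _⟩
    rwa [hinter, hnull] at this
  have hcompl : ∀ δ : ℝ, μ.real {ω | δ ≤ D ω} = 1 - μ.real {ω | D ω < δ} := fun δ => by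
    rw [← probReal_univ (μ := μ), ← measureReal_compl (measurableSet_lt hmeas measurable_const)]
    simp only [Set.compl_ofPred, not_lt]
  simp_rw [hcompl]
  simpa [measureReal_def] using
    ((ENNReal.tendsto_toReal ENNReal.zero_ne_top).comp hbelow).const_sub 1

theorem stmt12_general {Ω : Type} [MeasurableSpace Ω] (μ : Measure Ω) [IsProbabilityMeasure μ]
    (D : Ω → ℝ) (hmeas : Measurable D) (hD0 : ∀ᵐ ω ∂μ, 0 ≤ D ω)
    (hatom : μ {ω | D ω = 0} = 0)
    (γ : ℝ → ℝ)
    (hpos : ∀ η : ℝ, 0 < η → 0 < γ η) (hle : ∀ η : ℝ, 0 < η → γ η ≤ 1)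
    (hIntEq : ∀ η : ℝ, 0 < η → Integrable (fun ω => D ω / (η + γ η * D ω)) μ)
    (heq : ∀ η : ℝ, 0 < η → γ η = ∫ ω, D ω / (η + γ η * D ω) ∂μ) :
    Tendsto γ (𝓝[>] 0) (𝓝 1) := by
  have hnull : μ {ω | D ω ≤ 0} = 0 := by
    refine measure_mono_null (fun ω hω => ?_) (measure_union_null hatom (ae_iff.mp hD0))
    exact (eq_or_lt_of_le (Set.mem_ofPred.mp hω)).imp id not_le.mpr
  have hlower : ∀ δ > 0, ∀ η > 0, δ / (η + δ) * μ.real {ω | δ ≤ D ω} ≤ γ η :=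
    fun δ hδ η hη => (heq η hη).symm ▸ mul_measureReal_le_integral_div_add_mul hD0 hη
      (hpos η hη).le (hle η hη) hδ (hIntEq η hη)
  refine tendsto_order.2 ⟨fun a ha => ?_, fun b hb => ?_⟩
  · obtain ⟨δ, hδa, hδ⟩ := (((tendsto_measureReal_le_nhdsGT_zero hmeas hnull).eventually
      (lt_mem_nhds ha)).and self_mem_nhdsWithin).exists
    have hfactor : Tendsto (fun η => δ / (η + δ)) (𝓝[>] 0) (𝓝 1) := by
      have : ContinuousAt (fun η => δ / (η + δ)) 0 :=
        continuousAt_const.div (continuousAt_id.add continuousAt_const) (by simpa using hδ.ne')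
      simpa [hδ.ne'] using this.tendsto.mono_left nhdsWithin_le_nhds
    filter_upwards [((hfactor.mul_const _).eventually (lt_mem_nhds (by simpa using hδa))),
      self_mem_nhdsWithin] with η hη hη0
    exact hη.trans_le (hlower δ hδ η hη0)
  · filter_upwards [self_mem_nhdsWithin] with η hη using (hle η hη).trans_lt hb

theorem stmt12 {Ω : Type} [MeasurableSpace Ω] (μ : Measure Ω) [IsProbabilityMeasure μ]
    (D : Ω → ℝ) (hmeas : Measurable D) (hD0 : ∀ᵐ ω ∂μ, 0 ≤ D ω)
    (hInt : Integrable D μ) (hmean : ∫ ω, D ω ∂μ = 1)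
    (hatom : μ {ω | D ω = 0} = 0)
    (γ : ℝ → ℝ)
    (hpos : ∀ η : ℝ, 0 < η → 0 < γ η) (hle : ∀ η : ℝ, 0 < η → γ η ≤ 1)
    (hIntEq : ∀ η : ℝ, 0 < η → Integrable (fun ω => D ω / (η + γ η * D ω)) μ)
    (heq : ∀ η : ℝ, 0 < η → γ η = ∫ ω, D ω / (η + γ η * D ω) ∂μ) :
    Tendsto γ (𝓝[>] 0) (𝓝 1) :=
  stmt12_general μ D hmeas hD0 hatom γ hpos hle hIntEq heq
end
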